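/- arXiv:2009.01996 — 2 statements merged into one kernel-verified Lean document; each statement's English description precedes it below -/
import Mathlib

section
/- Let G be the graph obtained from the path P₇ = u₁u₂⋯u₇ by adding the edges u₁u₄ and u₂u₅. Then G is bipartite with parts {u₁,u₃,u₅,u₇} and {u₂,u₄,u₆}, has 8 edges, and its local antimagic chromatic number is not 2. -/
/-!
With at most two induced labels, the labels alternate along every path, so the four vertices
`u₁, u₃, u₅, u₇` of the even side share one label `c`. Every edge has exactly one end on that
side, hence `4c = 1 + ⋯ + 8 = 36` and `c = 9`; but the pendant vertex `u₇` carries the label of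
its only edge, which is at most `8`.
-/

open Finset

namespace LocalAntimagic

variable {V : Type*} [Fintype V] [DecidableEq V]

/-- The induced vertex label: sum of labels of edges incident to `v`. -/
def inducedSum (G : SimpleGraph V) [DecidableRel G.Adj] (f : Sym2 V → ℕ) (v : V) : ℕ :=
  ∑ e ∈ G.incidenceFinset v, f e

/-- `f` is a local antimagic labeling of `G`: a bijection from the edge set onto
`{1, …, q}` (`q` the number of edges) such that adjacent vertices get distinct
induced sums. -/
def IsLocalAntimagic (G : SimpleGraph V) [DecidableRel G.Adj] (f : Sym2 V → ℕ) : Prop :=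
  Set.BijOn f G.edgeSet (Set.Icc 1 G.edgeFinset.card) ∧
  ∀ ⦃u v⦄, G.Adj u v → inducedSum G f u ≠ inducedSum G f v

/-- The number of distinct induced vertex labels under `f`. -/
def colorCount (G : SimpleGraph V) [DecidableRel G.Adj] (f : Sym2 V → ℕ) : ℕ :=
  (Finset.image (inducedSum G f) Finset.univ).card

/-- The local antimagic chromatic number of `G` (`⊤` if no local antimagic
labeling exists). -/
noncomputable def chiLA (G : SimpleGraph V) [DecidableRel G.Adj] : ℕ∞ :=
  sInf {n : ℕ∞ | ∃ f : Sym2 V → ℕ, IsLocalAntimagic G f ∧ (colorCount G f : ℕ∞) = n}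

/-- The circulant graph on `ℤ/nℤ` with connection set `S`. -/
def circulant (n : ℕ) [NeZero n] (S : Finset (ZMod n)) : SimpleGraph (ZMod n) where
  Adj u v := u ≠ v ∧ (u - v ∈ S ∨ v - u ∈ S)
  symm := ⟨fun u v h => ⟨h.1.symm, h.2.symm⟩⟩
  loopless := ⟨fun v h => h.1 rfl⟩

instance (n : ℕ) [NeZero n] (S : Finset (ZMod n)) : DecidableRel (circulant n S).Adj :=
  fun u v => inferInstanceAs (Decidable (u ≠ v ∧ (u - v ∈ S ∨ v - u ∈ S)))

/-- The cycle `C_n` as a circulant graph on `ℤ/nℤ`. -/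
def cycle (n : ℕ) [NeZero n] : SimpleGraph (ZMod n) := circulant n {1}

instance (n : ℕ) [NeZero n] : DecidableRel (cycle n).Adj :=
  inferInstanceAs (DecidableRel (circulant n {1}).Adj)

/-- The graph obtained from `G` by merging vertices according to the
identification map `q` (adjacent iff distinct and some preimages are adjacent). -/
def mergeGraph {V' W : Type*} (G : SimpleGraph V') (q : V' → W) : SimpleGraph W where
  Adj a b := a ≠ b ∧ ∃ u v, q u = a ∧ q v = b ∧ G.Adj u v
  symm := by
    constructor
    rintro a b ⟨hab, u, v, hu, hv, huv⟩
    exact ⟨hab.symm, v, u, hv, hu, huv.symm⟩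
  loopless := ⟨fun a h => h.1 rfl⟩

end LocalAntimagic

namespace LocalAntimagic

variable {V : Type*} [Fintype V] [DecidableEq V] {G : SimpleGraph V} [DecidableRel G.Adj]
  {f : Sym2 V → ℕ}

theorem exists_colorCount_eq_of_chiLA_eq {n : ℕ} (h : chiLA G = n) :
    ∃ f, IsLocalAntimagic G f ∧ colorCount G f = n := by
  have hne : {n : ℕ∞ | ∃ f, IsLocalAntimagic G f ∧ (colorCount G f : ℕ∞) = n}.Nonempty := by
    by_contra hempty
    rw [chiLA, Set.not_nonempty_iff_eq_empty.mp hempty, sInf_empty] at h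
    exact ENat.top_ne_natCast n h
  obtain ⟨f, hf, hcount⟩ := csInf_mem hne
  exact ⟨f, hf, by rwa [← chiLA, h, Nat.cast_inj] at hcount⟩

theorem IsLocalAntimagic.sum_edgeFinset (hf : IsLocalAntimagic G f) :
    ∑ e ∈ G.edgeFinset, f e = ∑ i ∈ Icc 1 #G.edgeFinset, i := by
  obtain ⟨⟨hmaps, hinj, hsurj⟩, -⟩ := hf
  refine Finset.sum_nbij f (fun e he => ?_) (by simpa using hinj) (by simpa using hsurj)
    (fun _ _ => rfl)
  simpa using hmaps (G.mem_edgeFinset.mp he)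

theorem IsLocalAntimagic.inducedSum_le_of_degree_eq_one (hf : IsLocalAntimagic G f) {v : V}
    (hv : G.degree v = 1) : inducedSum G f v ≤ #G.edgeFinset := by
  obtain ⟨e, he⟩ := Finset.card_eq_one.mp (G.card_incidenceFinset_eq_degree v ▸ hv)
  have hedge : e ∈ G.edgeSet := G.incidenceSet_subset v (by simp [← G.mem_incidenceFinset, he])
  rw [inducedSum, he, Finset.sum_singleton]
  exact (hf.1.mapsTo hedge).2

theorem IsLocalAntimagic.inducedSum_eq_of_adj_of_adj (hf : IsLocalAntimagic G f)
    (hcount : colorCount G f ≤ 2) {u v w : V} (huv : G.Adj u v) (hvw : G.Adj v w) :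
    inducedSum G f u = inducedSum G f w := by
  by_contra huw
  have h3 : #({inducedSum G f u, inducedSum G f v, inducedSum G f w} : Finset ℕ) = 3 :=
    Finset.card_eq_three.mpr ⟨_, _, _, hf.2 huv, huw, hf.2 hvw, rfl⟩
  have hsub : ({inducedSum G f u, inducedSum G f v, inducedSum G f w} : Finset ℕ) ⊆
      univ.image (inducedSum G f) := by
    simp [Finset.insert_subset_iff]
  have := Finset.card_le_card hsub
  rw [colorCount] at hcount
  omega

theorem sum_inducedSum_of_adj_iff_notMem (A : Finset V)
    (hA : ∀ ⦃u v⦄, G.Adj u v → (u ∈ A ↔ v ∉ A)) :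
    ∑ v ∈ A, inducedSum G f v = ∑ e ∈ G.edgeFinset, f e := by
  simp only [inducedSum, G.incidenceFinset_eq_filter]
  rw [Finset.sum_comm' (t' := G.edgeFinset) (s' := fun e => A.filter (· ∈ e))]
  · refine Finset.sum_congr rfl fun e he => ?_
    suffices #(A.filter (· ∈ e)) = 1 by rw [Finset.sum_const, this, one_smul]
    induction e using Sym2.ind with
    | _ u v =>
      have huv := hA (G.mem_edgeFinset.mp he)
      rw [Finset.card_eq_one]
      by_cases hu : u ∈ A
      · exact ⟨u, by ext x; simp only [mem_filter, Sym2.mem_iff, mem_singleton]; grind⟩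
      · exact ⟨v, by ext x; simp only [mem_filter, Sym2.mem_iff, mem_singleton]; grind⟩
  · intro v e
    simp only [mem_filter]
    tauto

end LocalAntimagic

open LocalAntimagic in
/-- the graph obtained from the path `u₁u₂⋯u₇` (vertices `0,…,6`)
by adding edges `u₁u₄` and `u₂u₅` is bipartite with parts `{0,2,4,6}` and
`{1,3,5}`, has 8 edges, and its local antimagic chromatic number is not 2. -/
theorem stmt2 (G : SimpleGraph (Fin 7)) [DecidableRel G.Adj]
    (hG : ∀ u v : Fin 7, G.Adj u v ↔
      (s(u, v) ∈ ({s(0, 1), s(1, 2), s(2, 3), s(3, 4), s(4, 5), s(5, 6),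
        s(0, 3), s(1, 4)} : Finset (Sym2 (Fin 7))))) :
    (∀ u v : Fin 7, G.Adj u v →
      (u ∈ ({0, 2, 4, 6} : Finset (Fin 7)) ∧ v ∈ ({1, 3, 5} : Finset (Fin 7))) ∨
      (u ∈ ({1, 3, 5} : Finset (Fin 7)) ∧ v ∈ ({0, 2, 4, 6} : Finset (Fin 7)))) ∧
    G.edgeFinset.card = 8 ∧ chiLA G ≠ 2 := by
  set F : Finset (Sym2 (Fin 7)) := {s(0, 1), s(1, 2), s(2, 3), s(3, 4), s(4, 5), s(5, 6),
    s(0, 3), s(1, 4)}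
  have hcard : #G.edgeFinset = 8 := by
    rw [show G.edgeFinset = F by ext e; induction e using Sym2.ind with | _ u v => simp [hG]]
    rfl
  refine ⟨fun u v h => by rw [hG] at h; revert u v; decide, hcard, fun hchi => ?_⟩
  obtain ⟨f, hf, hcount⟩ := exists_colorCount_eq_of_chiLA_eq hchi
  have adj (u v : Fin 7) (h : s(u, v) ∈ F := by decide) : G.Adj u v := (hG u v).mpr h
  have h64 := hf.inducedSum_eq_of_adj_of_adj hcount.le (adj 6 5) (adj 5 4)
  have h42 := hf.inducedSum_eq_of_adj_of_adj hcount.le (adj 4 3) (adj 3 2)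
  have h20 := hf.inducedSum_eq_of_adj_of_adj hcount.le (adj 2 1) (adj 1 0)
  have hsum : ∑ v ∈ ({0, 2, 4, 6} : Finset (Fin 7)), inducedSum G f v = 36 := by
    rw [sum_inducedSum_of_adj_iff_notMem _ fun u v h => by rw [hG] at h; revert u v; decide,
      hf.sum_edgeFinset, hcard]
    rfl
  have hdeg : G.degree 6 = 1 := by
    rw [← G.card_neighborFinset_eq_degree, show G.neighborFinset 6 = {5} by
      ext w; rw [SimpleGraph.mem_neighborFinset, hG, mem_singleton]; revert w; decide]
    rfl
  have hpendant := hf.inducedSum_le_of_degree_eq_one hdeg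
  simp only [mem_insert, Fin.reduceEq, mem_singleton, or_self, not_false_eq_true, sum_insert,
    sum_singleton] at hsum
  omega
end

section
/- Let n ≥ 2, t ≥ 1, and let 1 < a₁ < ⋯ < a_t < n with gcd(a_j, 2n) = 1 for all j. Then the local antimagic chromatic number of the circulant graph C_{2n}(1, a₁, ..., a_t) equals 3. -/
open Finset

/-!
Each generator `sᵢ` of the connection set is a unit, so `k ↦ k sᵢ` traces a Hamiltonian
cycle `Γᵢ`, and these cycles partition the edges. Labeling `Γᵢ` with the C-labeling of `C_{2n}`
shifted by `2ni` uses every label once, and the vertex `v` receives `∑ᵢ 4ni` plus `m` times its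
C-labeling sum in `Γᵢ`. That sum is `n + 2`, `2n + 2` or `2n + 1` according as `v = 0`, `v` is
even or `v` is odd, whatever `i` is, because multiplying by the odd unit `sᵢ⁻¹` preserves
parity; adjacent vertices have opposite parity, so this labeling is local antimagic with three
labels.

Conversely, with two labels the label classes would form a bipartition. Regularity makes the two
classes equally large, and summing the induced labels over either class counts every edge label
once, which forces the two labels to agree.
-/

namespace LocalAntimagic

section InducedSum

variable {V : Type*} [Fintype V] [DecidableEq V] {G : SimpleGraph V} [DecidableRel G.Adj]

theorem inducedSum_eq_sum_neighborFinset (f : Sym2 V → ℕ) (v : V) :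
    inducedSum G f v = ∑ w ∈ G.neighborFinset v, f s(v, w) := by
  refine (Finset.sum_nbij (fun w => s(v, w)) (fun w hw => ?_) (fun w _ w' _ h => ?_)
    (fun e he => ?_) (fun _ _ => rfl)).symm
  · simpa [SimpleGraph.mem_incidenceFinset] using hw
  · exact Sym2.congr_right.1 h
  · obtain ⟨he, hv⟩ := (G.mem_incidenceFinset v e).1 he
    refine ⟨Sym2.Mem.other hv, ?_, Sym2.other_spec hv⟩
    rwa [Finset.mem_coe, SimpleGraph.mem_neighborFinset, ← SimpleGraph.mem_edgeSet,
      Sym2.other_spec hv]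

theorem sum_inducedSum_of_isBipartiteWith {s t : Finset V}
    (h : G.IsBipartiteWith s t) (f : Sym2 V → ℕ) :
    ∑ v ∈ s, inducedSum G f v = ∑ e ∈ G.edgeFinset, f e := by
  have hdisj : (s : Set V).PairwiseDisjoint (fun v => G.incidenceFinset v) := by
    intro u hu v hv huv
    refine Finset.disjoint_left.2 fun e heu hev => ?_
    rw [SimpleGraph.mem_incidenceFinset] at heu hev
    have hadj := G.adj_of_mem_incidenceSet huv heu hev
    rcases h.mem_of_adj hadj with ⟨-, hvt⟩ | ⟨hut, -⟩
    · exact Set.disjoint_left.1 h.disjoint hv hvt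
    · exact Set.disjoint_left.1 h.disjoint hu hut
  have hcover : s.biUnion (fun v => G.incidenceFinset v) = G.edgeFinset := by
    ext e
    simp only [Finset.mem_biUnion, SimpleGraph.mem_incidenceFinset, SimpleGraph.mem_edgeFinset]
    refine ⟨fun ⟨_, _, he⟩ => he.1, fun he => ?_⟩
    induction e using Sym2.ind with
    | _ a b =>
      rcases h.mem_of_adj he with ⟨ha, -⟩ | ⟨-, hb⟩
      · exact ⟨a, ha, he, Sym2.mem_mk_left a b⟩
      · exact ⟨b, hb, he, Sym2.mem_mk_right a b⟩
  rw [← hcover, Finset.sum_biUnion hdisj]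
  rfl

theorem three_le_colorCount [Nonempty V] {d : ℕ} (hG : G.IsRegularOfDegree d) (hd : 0 < d)
    {f : Sym2 V → ℕ} (hf : ∀ ⦃u v⦄, G.Adj u v → inducedSum G f u ≠ inducedSum G f v) :
    3 ≤ colorCount G f := by
  by_contra! hlt
  set S := inducedSum G f
  obtain u := Classical.arbitrary V
  obtain ⟨w, huw⟩ := (G.degree_pos_iff_exists_adj u).1 (hG u ▸ hd)
  have himage : Finset.image S univ = {S u, S w} :=
    (Finset.eq_of_subset_of_card_le (by simp [Finset.insert_subset_iff])
      (by rw [Finset.card_pair (hf huw)]; exact Nat.lt_succ_iff.1 hlt)).symm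
  have hval (v : V) : S v = S u ∨ S v = S w := by
    simpa [himage] using Finset.mem_image_of_mem S (Finset.mem_univ v)
  set X := univ.filter (S · = S u)
  set Y := univ.filter (S · = S w)
  have hXY : G.IsBipartiteWith X Y := by
    refine ⟨Finset.disjoint_coe.2 (Finset.disjoint_filter.2 fun v _ hv => hv ▸ hf huw), ?_⟩
    intro a b hab
    have := hf hab
    simp only [Finset.coe_filter, Finset.mem_univ, true_and, Set.mem_ofPred_eq, X, Y]
    rcases hval a with ha | ha <;> rcases hval b with hb | hb <;> simp_all
  have hcard : #X = #Y := by
    have := SimpleGraph.isBipartiteWith_sum_degrees_eq hXY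
    simp only [hG _, Finset.sum_const, smul_eq_mul] at this
    exact Nat.eq_of_mul_eq_mul_right hd this
  have hsum : #X * S u = #Y * S w := by
    have hX := sum_inducedSum_of_isBipartiteWith hXY f
    have hY := sum_inducedSum_of_isBipartiteWith hXY.symm f
    rw [Finset.sum_congr rfl fun v hv => (Finset.mem_filter.1 hv).2] at hX
    rw [Finset.sum_congr rfl fun v hv => (Finset.mem_filter.1 hv).2] at hY
    simp only [Finset.sum_const, smul_eq_mul] at hX hY
    rw [hX, hY]
  have hX : 0 < #X := Finset.card_pos.2 ⟨u, by simp [X]⟩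
  rw [hcard] at hsum hX
  exact hf huw (Nat.eq_of_mul_eq_mul_left hX hsum)

end InducedSum

section Circulant

variable {N : ℕ} [NeZero N] {S : Finset (ZMod N)}

theorem circulant_isRegularOfDegree :
    (circulant N S).IsRegularOfDegree ((circulant N S).degree 0) := fun v => by
  let φ : circulant N S ≃g circulant N S :=
    { Equiv.addRight v with map_rel_iff' := by simp [circulant] }
  have := φ.degree_eq 0
  rwa [show φ 0 = v from zero_add v] at this

theorem circulant_adj_add {x : ZMod N} (hx : x ∈ S) (hx0 : x ≠ 0) (u : ZMod N) :
    (circulant N S).Adj u (u + x) :=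
  ⟨by simpa using hx0, Or.inr (by simpa using hx)⟩

theorem exists_eq_of_mem_edgeSet_circulant {e : Sym2 (ZMod N)}
    (he : e ∈ (circulant N S).edgeSet) : ∃ x ∈ S, ∃ u, e = s(u, u + x) := by
  induction e using Sym2.ind with
  | _ a b =>
    rcases he.2 with h | h
    · exact ⟨a - b, h, b, by rw [add_sub_cancel, Sym2.eq_swap]⟩
    · exact ⟨b - a, h, a, by rw [add_sub_cancel]⟩

end Circulant

section CycleLabel

/-- The C-labeling of the cycle `C_{2n}`: the edge `{k, k + 1}` gets `k / 2 + 1` for even `k`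
and `2n - k / 2` for odd `k`, i.e. the labels `1, 2n, 2, 2n - 1, …` in order around the cycle. -/
def cycleLabel (n k : ℕ) : ℕ := if Even k then k / 2 + 1 else 2 * n - k / 2

variable {n : ℕ}

theorem bijOn_cycleLabel : Set.BijOn (cycleLabel n) (Set.Iio (2 * n)) (Set.Icc 1 (2 * n)) := by
  refine ⟨fun k hk => ?_, fun k hk l hl h => ?_, fun r hr => ?_⟩
  · simp only [Set.mem_Iio, Set.mem_Icc, cycleLabel, Nat.even_iff] at hk ⊢
    split_ifs <;> omega
  · simp only [Set.mem_Iio, cycleLabel, Nat.even_iff] at hk hl h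
    split_ifs at h <;> omega
  · simp only [Set.mem_Icc, Set.mem_image, Set.mem_Iio, cycleLabel, Nat.even_iff] at hr ⊢
    rcases le_or_gt r n with h | h
    · exact ⟨2 * (r - 1), by omega, by split_ifs <;> omega⟩
    · exact ⟨2 * (2 * n - r) + 1, by omega, by split_ifs <;> omega⟩

/-- The label the C-labeling induces at the vertex `x` of `C_{2n}`. -/
def cycleVertexLabel (n : ℕ) (x : ZMod (2 * n)) : ℕ :=
  if x = 0 then n + 2 else if Even x.val then 2 * n + 2 else 2 * n + 1

theorem cycleVertexLabel_eq_iff_not_even (hn : 2 ≤ n) (x : ZMod (2 * n)) :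
    cycleVertexLabel n x = 2 * n + 1 ↔ ¬Even x.val := by
  unfold cycleVertexLabel
  split_ifs <;> simp_all; omega

theorem castHom_eq_one_of_isUnit {s : ZMod (2 * n)} (hs : IsUnit s) :
    ZMod.castHom (dvd_mul_right 2 n) (ZMod 2) s = 1 := by
  have key : ∀ y : ZMod 2, y ≠ 0 → y = 1 := by decide
  exact key _ (hs.map _).ne_zero

variable [NeZero n]

instance fact_one_lt_two_mul : Fact (1 < 2 * n) := ⟨by have := Nat.pos_of_neZero n; omega⟩

theorem cycleLabel_val_sub_one_add (hn : 2 ≤ n) (x : ZMod (2 * n)) :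
    cycleLabel n (x - 1).val + cycleLabel n x.val = cycleVertexLabel n x := by
  have hone : (1 : ZMod (2 * n)).val = 1 := ZMod.val_one _
  have hlt := ZMod.val_lt x
  by_cases hx : x = 0
  · have : ((0 : ZMod (2 * n)) - 1).val = 2 * n - 1 := by
      rw [zero_sub, ZMod.val_neg_of_ne_zero, hone]
    simp only [hx, this, ZMod.val_zero, cycleVertexLabel, if_true, cycleLabel, Nat.even_iff]
    split_ifs <;> omega
  · have hx0 : x.val ≠ 0 := (ZMod.val_ne_zero x).2 hx
    rw [ZMod.val_sub (by omega), hone]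
    simp only [hx, cycleVertexLabel, if_false, cycleLabel, Nat.even_iff]
    split_ifs <;> omega

variable {x s : ZMod (2 * n)}

theorem even_val_iff_castHom_eq_zero (x : ZMod (2 * n)) :
    Even x.val ↔ ZMod.castHom (dvd_mul_right 2 n) (ZMod 2) x = 0 := by
  rw [ZMod.castHom_apply, ZMod.cast_eq_val, ZMod.natCast_eq_zero_iff_even]

theorem even_val_mul_of_isUnit (hs : IsUnit s) : Even (x * s).val ↔ Even x.val := by
  rw [even_val_iff_castHom_eq_zero, even_val_iff_castHom_eq_zero, map_mul,
    castHom_eq_one_of_isUnit hs, mul_one]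

theorem even_val_add_of_isUnit (hs : IsUnit s) : Even (x + s).val ↔ ¬Even x.val := by
  rw [even_val_iff_castHom_eq_zero, even_val_iff_castHom_eq_zero, map_add,
    castHom_eq_one_of_isUnit hs]
  generalize ZMod.castHom (dvd_mul_right 2 n) (ZMod 2) x = y
  revert y
  decide

theorem cycleVertexLabel_mul_of_isUnit (hs : IsUnit s) :
    cycleVertexLabel n (x * s) = cycleVertexLabel n x := by
  simp only [cycleVertexLabel, hs.mul_left_eq_zero, even_val_mul_of_isUnit hs]

theorem cycleVertexLabel_mul_inv_of_isUnit (hs : IsUnit s) :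
    cycleVertexLabel n (x * s⁻¹) = cycleVertexLabel n x := by
  rw [← cycleVertexLabel_mul_of_isUnit hs, mul_assoc, ZMod.inv_mul_of_unit _ hs, mul_one]

theorem cycleVertexLabel_add_ne (hn : 2 ≤ n) (hs : IsUnit s) :
    cycleVertexLabel n (x + s) ≠ cycleVertexLabel n x := fun h => by
  have := cycleVertexLabel_eq_iff_not_even hn (x + s)
  rw [h, cycleVertexLabel_eq_iff_not_even hn, even_val_add_of_isUnit hs] at this
  tauto

theorem image_cycleVertexLabel (hn : 2 ≤ n) :
    univ.image (cycleVertexLabel n) = {n + 2, 2 * n + 2, 2 * n + 1} := by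
  have hval (k : ℕ) (hk : k ≤ 2) : (k : ZMod (2 * n)).val = k := ZMod.val_cast_of_lt (by omega)
  ext c
  simp only [Finset.mem_image, Finset.mem_univ, true_and, Finset.mem_insert,
    Finset.mem_singleton]
  constructor
  · rintro ⟨x, rfl⟩
    unfold cycleVertexLabel
    split_ifs <;> simp
  · rintro (rfl | rfl | rfl)
    · exact ⟨0, by simp [cycleVertexLabel]⟩
    · refine ⟨(2 : ℕ), ?_⟩
      rw [cycleVertexLabel, if_neg ((ZMod.val_ne_zero _).1 (by rw [hval 2 le_rfl]; omega)),
        if_pos (by rw [hval 2 le_rfl]; exact even_two)]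
    · refine ⟨(1 : ℕ), ?_⟩
      rw [cycleVertexLabel, if_neg ((ZMod.val_ne_zero _).1 (by rw [hval 1 (by omega)]; omega)),
        if_neg (by rw [hval 1 (by omega)]; exact Nat.not_even_one)]

end CycleLabel

section Labeling

variable {n m : ℕ}

/-- The generator `s i` traces the cycle `0, s i, 2 s i, …`; its edge `{k s i, (k + 1) s i}`
carries the C-labeling label of `{k, k + 1}` shifted by `2n i`. That label is attached here to the
arc `k s i → (k + 1) s i`, and `circulantLabeling` adds up both orientations of an edge. -/
def arcLabel (s : Fin m → ZMod (2 * n)) (u w : ZMod (2 * n)) : ℕ :=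
  ∑ i, if w = u + s i then 2 * n * i + cycleLabel n (u * (s i)⁻¹).val else 0

def circulantLabeling (s : Fin m → ZMod (2 * n)) : Sym2 (ZMod (2 * n)) → ℕ :=
  Sym2.lift ⟨fun u w => arcLabel s u w + arcLabel s w u, fun _ _ => add_comm _ _⟩

variable {s : Fin m → ZMod (2 * n)}

theorem circulantLabeling_mk_add (hinj : Function.Injective s)
    (hneg : ∀ i j, s i + s j ≠ 0) (u : ZMod (2 * n)) (i : Fin m) :
    circulantLabeling s s(u, u + s i) = 2 * n * i + cycleLabel n (u * (s i)⁻¹).val := by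
  have hfwd : arcLabel s u (u + s i) = 2 * n * i + cycleLabel n (u * (s i)⁻¹).val := by
    rw [arcLabel, Fintype.sum_eq_single i fun j hj =>
      if_neg fun h => hj (hinj (add_left_cancel h).symm), if_pos rfl]
  have hbwd : arcLabel s (u + s i) u = 0 :=
    Finset.sum_eq_zero fun j _ => if_neg fun h => hneg i j (by linear_combination -h)
  rw [circulantLabeling, Sym2.lift_mk]
  simp only [hfwd, hbwd, add_zero]

variable [NeZero n]

theorem inducedSum_circulantLabeling (hn : 2 ≤ n) (hu : ∀ i, IsUnit (s i)) (v : ZMod (2 * n)) :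
    inducedSum (circulant (2 * n) (univ.image s)) (circulantLabeling s) v =
      ∑ i : Fin m, 4 * n * i + m * cycleVertexLabel n v := by
  have hs0 (i : Fin m) : s i ≠ 0 := (hu i).ne_zero
  have hmem (i : Fin m) : s i ∈ univ.image s := Finset.mem_image_of_mem s (Finset.mem_univ i)
  have hsucc (i : Fin m) : v + s i ∈ (circulant (2 * n) (univ.image s)).neighborFinset v := by
    rw [SimpleGraph.mem_neighborFinset]; exact circulant_adj_add (hmem i) (hs0 i) v
  have hpred (i : Fin m) : v - s i ∈ (circulant (2 * n) (univ.image s)).neighborFinset v := by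
    rw [SimpleGraph.mem_neighborFinset]
    simpa using (circulant_adj_add (hmem i) (hs0 i) (v - s i)).symm
  have hcycle (i : Fin m) :
      cycleLabel n ((v - s i) * (s i)⁻¹).val + cycleLabel n (v * (s i)⁻¹).val =
        cycleVertexLabel n v := by
    rw [sub_mul, ZMod.mul_inv_of_unit _ (hu i), cycleLabel_val_sub_one_add hn,
      cycleVertexLabel_mul_inv_of_isUnit (hu i)]
  have hout : ∑ w ∈ (circulant (2 * n) (univ.image s)).neighborFinset v, arcLabel s v w =
      ∑ i : Fin m, (2 * n * i + cycleLabel n (v * (s i)⁻¹).val) := by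
    simp only [arcLabel]
    rw [Finset.sum_comm]
    exact Finset.sum_congr rfl fun i _ => by rw [Finset.sum_ite_eq', if_pos (hsucc i)]
  have hin : ∑ w ∈ (circulant (2 * n) (univ.image s)).neighborFinset v, arcLabel s w v =
      ∑ i : Fin m, (2 * n * i + cycleLabel n ((v - s i) * (s i)⁻¹).val) := by
    have hiff (w : ZMod (2 * n)) (i : Fin m) : v = w + s i ↔ w = v - s i := by
      rw [eq_sub_iff_add_eq, eq_comm]
    simp only [arcLabel, hiff]
    rw [Finset.sum_comm]
    exact Finset.sum_congr rfl fun i _ => by rw [Finset.sum_ite_eq', if_pos (hpred i)]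
  rw [inducedSum_eq_sum_neighborFinset]
  simp only [circulantLabeling, Sym2.lift_mk]
  have hterm (i : Fin m) : 2 * n * i + cycleLabel n (v * (s i)⁻¹).val +
      (2 * n * i + cycleLabel n ((v - s i) * (s i)⁻¹).val) =
        4 * n * i + cycleVertexLabel n v := by
    rw [← hcycle i]; ring
  rw [Finset.sum_add_distrib, hout, hin, ← Finset.sum_add_distrib]
  simp only [hterm, Finset.sum_add_distrib, Finset.sum_const, Finset.card_univ, Fintype.card_fin,
    smul_eq_mul]

theorem bijOn_two_mul_add_cycleLabel :
    Set.BijOn (fun p : Fin m × ZMod (2 * n) => 2 * n * p.1 + cycleLabel n p.2.val) Set.univ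
      (Set.Icc 1 (2 * n * m)) := by
  have hn0 : 0 < n := Nat.pos_of_neZero n
  have hg (x : ZMod (2 * n)) : 1 ≤ cycleLabel n x.val ∧ cycleLabel n x.val ≤ 2 * n :=
    bijOn_cycleLabel.mapsTo (Set.mem_Iio.2 (ZMod.val_lt x))
  have hdiv (i : ℕ) (x : ZMod (2 * n)) : (2 * n * i + cycleLabel n x.val - 1) / (2 * n) = i ∧
      (2 * n * i + cycleLabel n x.val - 1) % (2 * n) = cycleLabel n x.val - 1 := by
    have := hg x
    exact (Nat.div_mod_unique (by omega)).2 ⟨by omega, by omega⟩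
  refine ⟨fun ⟨i, x⟩ _ => ?_, fun ⟨i, x⟩ _ ⟨j, y⟩ _ h => ?_, fun r hr => ?_⟩
  · obtain ⟨h1, h2⟩ := hg x
    refine ⟨le_add_left h1, ?_⟩
    calc 2 * n * i + cycleLabel n x.val ≤ 2 * n * (i + 1) := by rw [mul_add]; omega
      _ ≤ 2 * n * m := Nat.mul_le_mul_left _ i.isLt
  · have hi := hdiv i x
    have hj := hdiv j y
    simp only [h] at hi
    have hxy : cycleLabel n x.val = cycleLabel n y.val := by
      have := hg x; have := hg y; omega
    rw [Prod.mk.injEq, Fin.ext_iff, ← ZMod.val_injective _ |>.eq_iff]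
    exact ⟨hi.1.symm.trans hj.1, bijOn_cycleLabel.injOn (ZMod.val_lt x) (ZMod.val_lt y) hxy⟩
  · obtain ⟨hr1, hr2⟩ := hr
    have hq : (r - 1) / (2 * n) < m := Nat.div_lt_of_lt_mul (by omega)
    obtain ⟨k, hk, hkr⟩ := bijOn_cycleLabel.surjOn
      (show (r - 1) % (2 * n) + 1 ∈ Set.Icc 1 (2 * n) from
        ⟨by omega, Nat.mod_lt _ (by omega)⟩)
    refine ⟨(⟨(r - 1) / (2 * n), hq⟩, (k : ZMod (2 * n))), trivial, ?_⟩
    simp only [ZMod.val_cast_of_lt (Set.mem_Iio.1 hk), hkr]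
    have := Nat.div_add_mod (r - 1) (2 * n)
    omega

theorem bijOn_circulantLabeling (hu : ∀ i, IsUnit (s i)) (hinj : Function.Injective s)
    (hneg : ∀ i j, s i + s j ≠ 0) :
    Set.BijOn (circulantLabeling s) (circulant (2 * n) (univ.image s)).edgeSet
      (Set.Icc 1 (2 * n * m)) := by
  let E (p : Fin m × ZMod (2 * n)) : Sym2 (ZMod (2 * n)) := s(p.2 * s p.1, p.2 * s p.1 + s p.1)
  have hLE : circulantLabeling s ∘ E = fun p => 2 * n * p.1 + cycleLabel n p.2.val := by
    funext ⟨i, x⟩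
    simp only [Function.comp, E, circulantLabeling_mk_add hinj hneg, mul_assoc,
      ZMod.mul_inv_of_unit _ (hu i), mul_one]
  have hrange : E '' Set.univ = (circulant (2 * n) (univ.image s)).edgeSet := by
    ext e
    constructor
    · rintro ⟨⟨i, x⟩, -, rfl⟩
      exact circulant_adj_add (Finset.mem_image_of_mem s (Finset.mem_univ i)) (hu i).ne_zero _
    · intro he
      obtain ⟨_, hx, u, rfl⟩ := exists_eq_of_mem_edgeSet_circulant he
      obtain ⟨i, -, rfl⟩ := Finset.mem_image.1 hx
      refine ⟨(i, u * (s i)⁻¹), trivial, ?_⟩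
      simp only [E, mul_assoc, ZMod.inv_mul_of_unit _ (hu i), mul_one]
  have hblock := bijOn_two_mul_add_cycleLabel (n := n) (m := m)
  rw [← hLE] at hblock
  rwa [← hrange, ← Set.bijOn_comp_iff hblock.injOn.of_comp]

theorem card_edgeFinset_circulant (hu : ∀ i, IsUnit (s i)) (hinj : Function.Injective s)
    (hneg : ∀ i j, s i + s j ≠ 0) :
    #(circulant (2 * n) (univ.image s)).edgeFinset = 2 * n * m := by
  have := bijOn_circulantLabeling hu hinj hneg
  rw [← SimpleGraph.coe_edgeFinset, ← Finset.coe_Icc] at this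
  rw [this.finsetCard_eq, Nat.card_Icc, Nat.add_sub_cancel]

theorem isLocalAntimagic_circulantLabeling (hn : 2 ≤ n) (hu : ∀ i, IsUnit (s i))
    (hinj : Function.Injective s) (hneg : ∀ i j, s i + s j ≠ 0) :
    IsLocalAntimagic (circulant (2 * n) (univ.image s)) (circulantLabeling s) := by
  refine ⟨card_edgeFinset_circulant hu hinj hneg ▸ bijOn_circulantLabeling hu hinj hneg,
    fun u v huv => ?_⟩
  rw [inducedSum_circulantLabeling hn hu, inducedSum_circulantLabeling hn hu, Ne,
    add_right_inj]
  obtain ⟨i, hi⟩ : ∃ i, u = v + s i ∨ v = u + s i := by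
    rcases huv.2 with h | h <;> obtain ⟨i, -, hi⟩ := Finset.mem_image.1 h
    exacts [⟨i, .inl (by rw [hi]; ring)⟩, ⟨i, .inr (by rw [hi]; ring)⟩]
  refine fun h => ?_
  have h' := Nat.eq_of_mul_eq_mul_left i.pos h
  rcases hi with rfl | rfl
  exacts [cycleVertexLabel_add_ne hn (hu i) h', cycleVertexLabel_add_ne hn (hu i) h'.symm]

theorem colorCount_circulantLabeling (hn : 2 ≤ n) (hm : 0 < m) (hu : ∀ i, IsUnit (s i)) :
    colorCount (circulant (2 * n) (univ.image s)) (circulantLabeling s) = 3 := by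
  have hsum : inducedSum (circulant (2 * n) (univ.image s)) (circulantLabeling s) =
      (fun c => ∑ i : Fin m, 4 * n * i + m * c) ∘ cycleVertexLabel n :=
    funext (inducedSum_circulantLabeling hn hu)
  have hinj : Function.Injective fun c => ∑ i : Fin m, 4 * n * i + m * c :=
    fun _ _ h => Nat.eq_of_mul_eq_mul_left hm (Nat.add_left_cancel h)
  rw [colorCount, hsum, ← Finset.image_image, Finset.card_image_of_injective _ hinj,
    image_cycleVertexLabel hn, Finset.card_eq_three]
  exact ⟨_, _, _, by omega, by omega, by omega, rfl⟩

theorem chiLA_circulant_eq_three_of_injective (hn : 2 ≤ n) (hm : 0 < m)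
    (hu : ∀ i, IsUnit (s i)) (hinj : Function.Injective s) (hneg : ∀ i j, s i + s j ≠ 0) :
    chiLA (circulant (2 * n) (univ.image s)) = 3 := by
  refine le_antisymm (sInf_le ⟨circulantLabeling s,
    isLocalAntimagic_circulantLabeling hn hu hinj hneg,
    by rw [colorCount_circulantLabeling hn hm hu]; rfl⟩) (le_sInf ?_)
  rintro _ ⟨f, hf, rfl⟩
  have hdeg : 0 < (circulant (2 * n) (univ.image s)).degree 0 :=
    (SimpleGraph.degree_pos_iff_exists_adj _ 0).2 ⟨_, circulant_adj_add
      (Finset.mem_image_of_mem s (Finset.mem_univ ⟨0, hm⟩)) (hu _).ne_zero 0⟩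
  exact_mod_cast three_le_colorCount circulant_isRegularOfDegree hdeg hf.2

end Labeling

theorem add_ne_zero_of_val_lt {n : ℕ} {x y : ZMod (2 * n)} (hx0 : x ≠ 0) (hx : x.val < n)
    (hy : y.val < n) : x + y ≠ 0 := fun h => by
  have := congrArg ZMod.val h
  rw [ZMod.val_add_of_lt (by omega), ZMod.val_zero] at this
  exact hx0 ((ZMod.val_eq_zero x).1 (by omega))

theorem chiLA_circulant_eq_three {n : ℕ} [NeZero n] (hn : 2 ≤ n) {S : Finset (ZMod (2 * n))}
    (hS : S.Nonempty) (hunit : ∀ x ∈ S, IsUnit x) (hneg : ∀ x ∈ S, ∀ y ∈ S, x + y ≠ 0) :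
    chiLA (circulant (2 * n) S) = 3 := by
  let s (i : Fin #S) : ZMod (2 * n) := S.equivFin.symm i
  have hmem (i : Fin #S) : s i ∈ S := (S.equivFin.symm i).2
  have himage : univ.image s = S := by
    ext x
    refine ⟨fun hx => ?_, fun hx => Finset.mem_image.2 ⟨S.equivFin ⟨x, hx⟩, by simp [s]⟩⟩
    obtain ⟨i, -, rfl⟩ := Finset.mem_image.1 hx
    exact hmem i
  rw [← himage]
  exact chiLA_circulant_eq_three_of_injective hn hS.card_pos (fun i => hunit _ (hmem i))
    (Subtype.val_injective.comp S.equivFin.symm.injective)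
    (fun i j => hneg _ (hmem i) _ (hmem j))

end LocalAntimagic

open LocalAntimagic in
theorem stmt12_general (n t : ℕ) [NeZero n] (hn : 2 ≤ n) (a : Fin t → ℕ)
    (hlt : ∀ j, a j < n) (hcop : ∀ j, Nat.gcd (a j) (2 * n) = 1) :
    chiLA (circulant (2 * n)
      (insert (1 : ZMod (2 * n))
        (Finset.image (fun j => ((a j : ℕ) : ZMod (2 * n))) Finset.univ))) = 3 := by
  set S := insert (1 : ZMod (2 * n)) (Finset.image (fun j => ((a j : ℕ) : ZMod (2 * n))) univ)
  have hunit : ∀ x ∈ S, IsUnit x := by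
    simp only [S, Finset.forall_mem_insert, Finset.forall_mem_image, Finset.mem_univ,
      forall_const]
    exact ⟨isUnit_one, fun j => (ZMod.isUnit_iff_coprime _ _).2 (hcop j)⟩
  have hsmall : ∀ x ∈ S, x.val < n := by
    simp only [S, Finset.forall_mem_insert, Finset.forall_mem_image, Finset.mem_univ,
      forall_const]
    exact ⟨by rw [ZMod.val_one]; omega,
      fun j => by rw [ZMod.val_cast_of_lt (by have := hlt j; omega)]; exact hlt j⟩
  exact chiLA_circulant_eq_three hn (Finset.insert_nonempty _ _) hunit
    fun x hx y hy => add_ne_zero_of_val_lt (hunit x hx).ne_zero (hsmall x hx) (hsmall y hy)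

open LocalAntimagic in
/-- for `1 < a₁ < ⋯ < a_t < n` with each `a_j` coprime to `2n`,
`χ_la(C_{2n}(1, a₁, …, a_t)) = 3`. -/
theorem stmt12 (n t : ℕ) [NeZero n] (hn : 2 ≤ n) (ht : 1 ≤ t)
    (a : Fin t → ℕ) (hmono : StrictMono a) (h1 : ∀ j, 1 < a j)
    (hlt : ∀ j, a j < n) (hcop : ∀ j, Nat.gcd (a j) (2 * n) = 1) :
    chiLA (circulant (2 * n)
      (insert (1 : ZMod (2 * n))
        (Finset.image (fun j => ((a j : ℕ) : ZMod (2 * n))) Finset.univ))) = 3 :=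
  stmt12_general n t hn a hlt hcop
end
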